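/- arXiv:2003.01796 — 3 statements merged into one kernel-verified Lean document; each statement's English description precedes it below -/
import Mathlib

section
/- Let B be the Banach space of sequences f = (f_n) with f_n ∈ B_n (normed spaces) and ‖f‖_B = sup_n n‖f_n‖ < ∞. Suppose R_{k,n}: B_k → B_n are bounded linear operators with ‖R_{k,n}‖ ≤ C·k·ξ_k/(n(|n−k|+1)) for all n,k ≥ 1, where (ξ_k) is a nonnegative sequence with Σ_k ξ_k < ∞. Then the operator R defined by (fR)_n = Σ_{k=1}^∞ f_k R_{k,n} is a well-defined bounded linear operator on B, and R is compact (it is the operator-norm limit of the finite-band truncations R^s with R^s_{k,n} = R_{k,n} for k ≤ s and 0 for k > s). -/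
/-- Let `B` be the weighted sequence space over finite-dimensional normed spaces
`B n` with `‖f‖_B = sup_n n‖fₙ‖`, and let `R k n : B k →L B n` satisfy
`‖R k n‖ ≤ C·k·ξₖ/(n(|n-k|+1))` with `ξ ∈ ℓ¹` nonnegative. Then
`(fR)ₙ = Σₖ (R k n)(fₖ)` is well defined (the series converges), `R` is a bounded
operator on `B`, and `R` is compact: it is approximated in operator norm by the
finite-band truncations `Rˢ` (`Rˢ_{k,n} = R_{k,n}` for `k ≤ s`, else `0`). -/
theorem band_operator_bounded_compact
    (B : ℕ+ → Type) [∀ n, NormedAddCommGroup (B n)] [∀ n, NormedSpace ℂ (B n)]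
    [∀ n, FiniteDimensional ℂ (B n)]
    (R : ∀ k n : ℕ+, B k →L[ℂ] B n)
    (C : ℝ) (hC : 0 < C) (ξ : ℕ+ → ℝ) (hξ : ∀ k, 0 ≤ ξ k) (hsum : Summable ξ)
    (hR : ∀ k n : ℕ+, ‖R k n‖ ≤ C * (k : ℝ) * ξ k / ((n : ℝ) * (|(n : ℝ) - (k : ℝ)| + 1))) :
    (∀ (f : ∀ k, B k) (M : ℝ), (∀ k : ℕ+, (k : ℝ) * ‖f k‖ ≤ M) →
      ∀ n : ℕ+, Summable (fun k : ℕ+ => (R k n) (f k))) ∧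
    (∃ K : ℝ, ∀ (f : ∀ k, B k) (M : ℝ), 0 ≤ M → (∀ k : ℕ+, (k : ℝ) * ‖f k‖ ≤ M) →
      ∀ n : ℕ+, (n : ℝ) * ‖∑' k : ℕ+, (R k n) (f k)‖ ≤ K * M) ∧
    (∀ ε > (0:ℝ), ∃ s : ℕ+, ∀ (f : ∀ k, B k) (M : ℝ), 0 ≤ M →
      (∀ k : ℕ+, (k : ℝ) * ‖f k‖ ≤ M) → ∀ n : ℕ+,
      (n : ℝ) * ‖(∑' k : ℕ+, (R k n) (f k)) -
        ∑' k : ℕ+, (if k ≤ s then (R k n) (f k) else 0)‖ ≤ ε * M) := by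
  -- key pointwise bound
  have key : ∀ (f : ∀ k, B k) (M : ℝ), (∀ k : ℕ+, (k : ℝ) * ‖f k‖ ≤ M) →
      ∀ k n : ℕ+, ‖(R k n) (f k)‖ ≤ C * M / (n : ℝ) * ξ k := by
    intro f M hf k n
    have hM : 0 ≤ M := le_trans (by simpa using norm_nonneg (f 1)) (hf 1)
    have hn : (0:ℝ) < n := by exact_mod_cast n.pos
    have hk : (0:ℝ) < k := by exact_mod_cast k.pos
    have hξk := hξ k
    have hD : (0:ℝ) < |(n : ℝ) - (k : ℝ)| + 1 := by positivity
    have h1 : ‖(R k n) (f k)‖ ≤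
        (C * (k : ℝ) * ξ k / ((n : ℝ) * (|(n : ℝ) - (k : ℝ)| + 1))) * ‖f k‖ :=
      le_trans ((R k n).le_opNorm _)
        (mul_le_mul_of_nonneg_right (hR k n) (norm_nonneg _))
    have h2 : (C * (k : ℝ) * ξ k / ((n : ℝ) * (|(n : ℝ) - (k : ℝ)| + 1))) * ‖f k‖
        = (C * ξ k / ((n : ℝ) * (|(n : ℝ) - (k : ℝ)| + 1))) * ((k : ℝ) * ‖f k‖) := by
      ring
    have h3 : (C * ξ k / ((n : ℝ) * (|(n : ℝ) - (k : ℝ)| + 1))) * ((k : ℝ) * ‖f k‖)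
        ≤ (C * ξ k / ((n : ℝ) * (|(n : ℝ) - (k : ℝ)| + 1))) * M :=
      mul_le_mul_of_nonneg_left (hf k) (by positivity)
    have h4 : (C * ξ k / ((n : ℝ) * (|(n : ℝ) - (k : ℝ)| + 1))) * M
        ≤ C * M / (n : ℝ) * ξ k := by
      have : C * M / (n : ℝ) * ξ k = C * ξ k * M / ((n : ℝ) * 1) := by ring
      rw [this]
      have h5 : C * ξ k / ((n : ℝ) * (|(n : ℝ) - (k : ℝ)| + 1)) * M
          = C * ξ k * M / ((n : ℝ) * (|(n : ℝ) - (k : ℝ)| + 1)) := by ring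
      rw [h5]
      gcongr
      exact le_add_of_nonneg_left (abs_nonneg _)
    calc ‖(R k n) (f k)‖ ≤ _ := h1
      _ = _ := h2
      _ ≤ _ := h3
      _ ≤ _ := h4
  have hMnn : ∀ (f : ∀ k, B k) (M : ℝ), (∀ k : ℕ+, (k : ℝ) * ‖f k‖ ≤ M) → 0 ≤ M :=
    fun f M hf => le_trans (by simpa using norm_nonneg (f 1)) (hf 1)
  have hsummable : ∀ (f : ∀ k, B k) (M : ℝ), (∀ k : ℕ+, (k : ℝ) * ‖f k‖ ≤ M) →
      ∀ n : ℕ+, Summable (fun k : ℕ+ => (R k n) (f k)) := by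
    intro f M hf n
    exact Summable.of_norm (Summable.of_nonneg_of_le (fun k => norm_nonneg _)
      (fun k => key f M hf k n) (hsum.mul_left (C * M / (n : ℝ))))
  refine ⟨hsummable, ⟨C * ∑' k, ξ k, ?_⟩, ?_⟩
  · intro f M hM hf n
    have hn : (0:ℝ) < n := by exact_mod_cast n.pos
    have hnorms : Summable (fun k : ℕ+ => ‖(R k n) (f k)‖) :=
      Summable.of_nonneg_of_le (fun k => norm_nonneg _)
        (fun k => key f M hf k n) (hsum.mul_left (C * M / (n : ℝ)))
    have h1 : ‖∑' k : ℕ+, (R k n) (f k)‖ ≤ ∑' k : ℕ+, ‖(R k n) (f k)‖ :=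
      norm_tsum_le_tsum_norm hnorms
    have h2 : ∑' k : ℕ+, ‖(R k n) (f k)‖ ≤ ∑' k : ℕ+, C * M / (n : ℝ) * ξ k :=
      Summable.tsum_le_tsum (fun k => key f M hf k n) hnorms (hsum.mul_left _)
    have h3 : ∑' k : ℕ+, C * M / (n : ℝ) * ξ k = C * M / (n : ℝ) * ∑' k, ξ k :=
      tsum_mul_left
    have h4 : (n : ℝ) * ‖∑' k : ℕ+, (R k n) (f k)‖
        ≤ (n : ℝ) * (C * M / (n : ℝ) * ∑' k, ξ k) :=
      mul_le_mul_of_nonneg_left (h1.trans (h2.trans_eq h3)) hn.le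
    have h5 : (n : ℝ) * (C * M / (n : ℝ) * ∑' k, ξ k) = (C * ∑' k, ξ k) * M := by
      field_simp
    linarith
  · intro ε hε
    have hεC : 0 < ε / C := by positivity
    obtain ⟨t, ht⟩ :=
      ((tendsto_order.1 (tendsto_tsum_compl_atTop_zero ξ)).2 _ hεC).exists
    set s : ℕ+ := ⟨t.sup (fun k : ℕ+ => (k : ℕ)) + 1, Nat.succ_pos _⟩ with hs
    have hts : ∀ k : ℕ+, k ∈ t → k ≤ s := by
      intro k hk
      have : (k : ℕ) ≤ t.sup (fun k : ℕ+ => (k : ℕ)) := Finset.le_sup hk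
      exact_mod_cast Nat.le_succ_of_le this
    refine ⟨s, ?_⟩
    intro f M hM hf n
    have hn : (0:ℝ) < n := by exact_mod_cast n.pos
    have hS1 := hsummable f M hf n
    have hS2 : Summable (fun k : ℕ+ => if k ≤ s then (R k n) (f k) else 0) := by
      apply summable_of_ne_finset_zero (s := Finset.Iic s)
      intro k hk
      simp only [Finset.mem_Iic] at hk
      simp [hk]
    have hdiff : (∑' k : ℕ+, (R k n) (f k)) -
        (∑' k : ℕ+, (if k ≤ s then (R k n) (f k) else 0))
        = ∑' k : ℕ+, (if k ≤ s then 0 else (R k n) (f k)) := by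
      rw [← Summable.tsum_sub hS1 hS2]
      congr 1
      funext k
      by_cases hk : k ≤ s <;> simp [hk]
    rw [hdiff]
    -- bound the tail
    have hg : Summable (fun k : ℕ+ => if k ≤ s then (0:ℝ) else C * M / (n : ℝ) * ξ k) := by
      apply Summable.of_nonneg_of_le (f := fun k : ℕ+ => C * M / (n : ℝ) * ξ k)
      · intro k
        have := hξ k
        by_cases hk : k ≤ s <;> simp [hk] <;> positivity
      · intro k
        have := hξ k
        by_cases hk : k ≤ s
        · simp [hk]; positivity
        · simp [hk]
      · exact hsum.mul_left _
    have hnorms : Summable (fun k : ℕ+ => ‖if k ≤ s then 0 else (R k n) (f k)‖) := by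
      apply Summable.of_nonneg_of_le (fun k => norm_nonneg _) _ hg
      intro k
      by_cases hk : k ≤ s
      · simp [hk]
      · simpa [hk] using key f M hf k n
    have h1 : ‖∑' k : ℕ+, (if k ≤ s then 0 else (R k n) (f k))‖
        ≤ ∑' k : ℕ+, ‖if k ≤ s then 0 else (R k n) (f k)‖ :=
      norm_tsum_le_tsum_norm hnorms
    have h2 : ∑' k : ℕ+, ‖if k ≤ s then 0 else (R k n) (f k)‖
        ≤ ∑' k : ℕ+, (if k ≤ s then (0:ℝ) else C * M / (n : ℝ) * ξ k) := by
      apply Summable.tsum_le_tsum _ hnorms hg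
      intro k
      by_cases hk : k ≤ s
      · simp [hk]
      · simpa [hk] using key f M hf k n
    have hind : Summable (fun k : ℕ+ => Set.indicator {k : ℕ+ | k ∉ t} ξ k) :=
      hsum.indicator _
    have h3 : ∑' k : ℕ+, (if k ≤ s then (0:ℝ) else C * M / (n : ℝ) * ξ k)
        ≤ ∑' k : ℕ+, C * M / (n : ℝ) * Set.indicator {k : ℕ+ | k ∉ t} ξ k := by
      apply Summable.tsum_le_tsum _ hg (hind.mul_left _)
      intro k
      by_cases hk : k ≤ s
      · simp only [hk, if_true]
        have : 0 ≤ Set.indicator {k : ℕ+ | k ∉ t} ξ k :=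
          Set.indicator_nonneg (fun x _ => hξ x) k
        positivity
      · have hkt : k ∉ t := fun h => hk (hts k h)
        simp [hk, Set.indicator_of_mem (by simpa using hkt : k ∈ {k : ℕ+ | k ∉ t})]
    have h4 : ∑' k : ℕ+, C * M / (n : ℝ) * Set.indicator {k : ℕ+ | k ∉ t} ξ k
        = C * M / (n : ℝ) * ∑' k : {k : ℕ+ // k ∉ t}, ξ k := by
      rw [tsum_mul_left]
      congr 1
      exact (tsum_subtype {k : ℕ+ | k ∉ t} ξ).symm
    have hδnn : 0 ≤ ∑' k : {k : ℕ+ // k ∉ t}, ξ k :=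
      tsum_nonneg (fun k => hξ k)
    have hfin : ‖∑' k : ℕ+, (if k ≤ s then 0 else (R k n) (f k))‖
        ≤ C * M / (n : ℝ) * ∑' k : {k : ℕ+ // k ∉ t}, ξ k := by
      calc _ ≤ _ := h1
        _ ≤ _ := h2
        _ ≤ _ := h3
        _ = _ := h4
    have h5 : (n : ℝ) * ‖∑' k : ℕ+, (if k ≤ s then 0 else (R k n) (f k))‖
        ≤ (n : ℝ) * (C * M / (n : ℝ) * ∑' k : {k : ℕ+ // k ∉ t}, ξ k) :=
      mul_le_mul_of_nonneg_left hfin hn.le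
    have h6 : (n : ℝ) * (C * M / (n : ℝ) * ∑' k : {k : ℕ+ // k ∉ t}, ξ k)
        = (C * ∑' k : {k : ℕ+ // k ∉ t}, ξ k) * M := by
      field_simp
    have h7 : (C * ∑' k : {k : ℕ+ // k ∉ t}, ξ k) * M ≤ ε * M := by
      apply mul_le_mul_of_nonneg_right _ hM
      calc C * ∑' k : {k : ℕ+ // k ∉ t}, ξ k ≤ C * (ε / C) := by
            exact mul_le_mul_of_nonneg_left ht.le hC.le
        _ = ε := by field_simp
    linarith
end

section
/- Let a ∈ [0,1), a ≠ 1/2. Define on [0,π]: f₁₁(x) = 1 + (1/(4πa²))(x − sin(2ax)/(2a)), f₂₂(x) = 1 − (1/π)(x − sin x), f₁₂(x) = (1/(2πa))( sin((a−1/2)x)/(a−1/2) − sin((a+1/2)x)/(a+1/2) ). Then f₁₁(x) ≥ 1, 0 < f₂₂(x) ≤ 1 for x ∈ [0,π), and the determinant Δ₀(x) = f₁₁(x)f₂₂(x) + f₁₂(x)² is strictly positive for all x ∈ [0,π). -/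
/-- `f₁₁(x) = 1 + (1/(4πa²))(x - sin(2ax)/(2a))`, interpreted by its limit
`1 + x³/(6π)` at `a = 0`. -/
noncomputable def f11 (a x : ℝ) : ℝ :=
  if a = 0 then 1 + x^3 / (6 * Real.pi)
  else 1 + (1 / (4 * Real.pi * a^2)) * (x - Real.sin (2*a*x) / (2*a))

/-- `f₂₂(x) = 1 - (1/π)(x - sin x)`. -/
noncomputable def f22 (x : ℝ) : ℝ := 1 - (1 / Real.pi) * (x - Real.sin x)

/-- `f₁₂(x) = (1/(2πa))(sin((a-1/2)x)/(a-1/2) - sin((a+1/2)x)/(a+1/2))`,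
interpreted by its limit at `a = 0`. -/
noncomputable def f12 (a x : ℝ) : ℝ :=
  if a = 0 then (4 * Real.sin (x/2) - 2*x*Real.cos (x/2)) / Real.pi
  else (1 / (2 * Real.pi * a)) *
    (Real.sin ((a - 1/2) * x) / (a - 1/2) - Real.sin ((a + 1/2) * x) / (a + 1/2))

/-- `Δ₀(x) = f₁₁f₂₂ + f₁₂²`, the determinant of `[[f₁₁, -f₁₂],[f₁₂, f₂₂]]`. -/
noncomputable def Delta0 (a x : ℝ) : ℝ := f11 a x * f22 x + f12 a x ^ 2

/-- For `a ∈ [0,1)`, `a ≠ 1/2`: `f₁₁ ≥ 1` on `[0,π]`, `0 < f₂₂ ≤ 1` on `[0,π)`,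
and `Δ₀ > 0` on `[0,π)`. -/
theorem example_determinant_positive
    (a : ℝ) (ha0 : 0 ≤ a) (ha1 : a < 1) (hah : a ≠ 1/2) :
    (∀ x ∈ Set.Icc (0:ℝ) Real.pi, 1 ≤ f11 a x) ∧
    (∀ x ∈ Set.Ico (0:ℝ) Real.pi, 0 < f22 x ∧ f22 x ≤ 1) ∧
    (∀ x ∈ Set.Ico (0:ℝ) Real.pi, 0 < Delta0 a x) := by
  have hpi : (0:ℝ) < Real.pi := Real.pi_pos
  have h11 : ∀ x ∈ Set.Icc (0:ℝ) Real.pi, 1 ≤ f11 a x := by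
    intro x hx
    obtain ⟨hx0, hxpi⟩ := hx
    unfold f11
    split_ifs with h
    · have : 0 ≤ x^3 / (6 * Real.pi) := by positivity
      linarith
    · have ha : 0 < a := lt_of_le_of_ne ha0 (Ne.symm h)
      have hsin : Real.sin (2*a*x) ≤ 2*a*x := Real.sin_le (by positivity)
      have hnum : 0 ≤ x - Real.sin (2*a*x) / (2*a) := by
        rw [sub_nonneg, div_le_iff₀ (by positivity)]
        linarith
      have hcoef : 0 < 1 / (4 * Real.pi * a^2) := by positivity
      nlinarith
  have h22 : ∀ x ∈ Set.Ico (0:ℝ) Real.pi, 0 < f22 x ∧ f22 x ≤ 1 := by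
    intro x hx
    obtain ⟨hx0, hxpi⟩ := hx
    have hs0 : 0 ≤ Real.sin x := Real.sin_nonneg_of_nonneg_of_le_pi hx0 hxpi.le
    have hs : Real.sin x ≤ x := Real.sin_le hx0
    unfold f22
    constructor
    · have : x - Real.sin x < Real.pi := by linarith
      rw [sub_pos]
      rw [div_mul_eq_mul_div, div_lt_iff₀ hpi]
      linarith
    · have : 0 ≤ (1 / Real.pi) * (x - Real.sin x) :=
        mul_nonneg (by positivity) (by linarith)
      linarith
  refine ⟨h11, h22, fun x hx => ?_⟩
  have h1 := h11 x ⟨hx.1, hx.2.le⟩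
  have h2 := (h22 x hx).1
  unfold Delta0
  nlinarith [sq_nonneg (f12 a x)]
end

section
/- Let (ξ_k)_{k≥1} be a nonnegative sequence with Σ_k (k·ξ_k)² < ∞. Then Σ_k ξ_k < ∞, and moreover there is a constant C (independent of n) such that for every n ≥ 1, Σ_{k=1}^∞ k ξ_k/(n(|n−k|+1)) ≤ (C/n)·(Σ_k (kξ_k)²)^{1/2}. -/
open Finset Real

/-- Cauchy–Schwarz for infinite sums of nonnegative reals. -/
lemma tsum_cs (f g : ℕ → ℝ) (hf : ∀ k, 0 ≤ f k) (hg : ∀ k, 0 ≤ g k)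
    (hf2 : Summable fun k => f k ^ 2) (hg2 : Summable fun k => g k ^ 2) :
    Summable (fun k => f k * g k) ∧
      (∑' k, f k * g k) ≤ Real.sqrt (∑' k, f k ^ 2) * Real.sqrt (∑' k, g k ^ 2) := by
  have hsum : Summable (fun k => f k * g k) :=
    Summable.of_nonneg_of_le (fun k => mul_nonneg (hf k) (hg k))
      (fun k => by nlinarith [sq_nonneg (f k - g k)])
      ((hf2.add hg2).div_const 2)
  refine ⟨hsum, Summable.tsum_le_of_sum_le hsum fun s => ?_⟩
  refine (Real.sum_mul_le_sqrt_mul_sqrt s f g).trans ?_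
  exact mul_le_mul (Real.sqrt_le_sqrt (Summable.sum_le_tsum s (fun k _ => sq_nonneg _) hf2))
    (Real.sqrt_le_sqrt (Summable.sum_le_tsum s (fun k _ => sq_nonneg _) hg2))
    (Real.sqrt_nonneg _) (Real.sqrt_nonneg _)

lemma basel_shift : Summable (fun j : ℕ => 1 / ((j : ℝ) + 1) ^ 2) ∧
    (∑' j : ℕ, 1 / ((j : ℝ) + 1) ^ 2) ≤ 3 := by
  have h0 : HasSum (fun n : ℕ => (1 : ℝ) / (n : ℝ) ^ 2) (π ^ 2 / 6) := hasSum_zeta_two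
  have h1' : HasSum (fun j : ℕ => (1 : ℝ) / (((j + 1 : ℕ)) : ℝ) ^ 2) (π ^ 2 / 6) :=
    (hasSum_nat_add_iff (f := fun n : ℕ => (1 : ℝ) / (n : ℝ) ^ 2) 1).mpr (by simpa using h0)
  have heq : (fun j : ℕ => (1 : ℝ) / (((j + 1 : ℕ)) : ℝ) ^ 2)
      = fun j : ℕ => 1 / ((j : ℝ) + 1) ^ 2 := by
    funext j; push_cast; ring
  have h1 : HasSum (fun j : ℕ => 1 / ((j : ℝ) + 1) ^ 2) (π ^ 2 / 6) := heq ▸ h1' 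
  refine ⟨h1.summable, h1.tsum_eq ▸ ?_⟩
  nlinarith [Real.pi_le_four, Real.pi_pos]

/-- The weight sum `Σ_k 1/(|n-k|+1)²` is bounded by `6`. -/
lemma weight_bound (n : ℕ) :
    Summable (fun k : ℕ => (1 / (|(n : ℝ) - (k : ℝ)| + 1)) ^ 2) ∧
      (∑' k : ℕ, (1 / (|(n : ℝ) - (k : ℝ)| + 1)) ^ 2) ≤ 6 := by
  obtain ⟨hb, hbs⟩ := basel_shift
  set b : ℕ → ℝ := fun k => (1 / (|(n : ℝ) - (k : ℝ)| + 1)) ^ 2 with hbdef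
  have htail : ∀ k : ℕ, b (k + (n + 1)) = 1 / ((k : ℝ) + 2) ^ 2 := by
    intro k
    have : |(n : ℝ) - ((k : ℕ) + (n + 1) : ℕ)| = (k : ℝ) + 1 := by
      push_cast
      rw [abs_of_nonpos (by linarith)]
      ring
    simp only [hbdef, this]
    rw [div_pow, one_pow]
    ring_nf
  have htail_sum : Summable (fun k : ℕ => b (k + (n + 1))) := by
    refine Summable.of_nonneg_of_le (fun k => by rw [htail]; positivity) (fun k => ?_) hb
    rw [htail]
    exact one_div_le_one_div_of_le (by positivity) (by nlinarith [Nat.cast_nonneg (α := ℝ) k])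
  have hbsum : Summable b := (summable_nat_add_iff (n + 1)).mp htail_sum
  refine ⟨hbsum, ?_⟩
  have hsplit := Summable.sum_add_tsum_nat_add (f := b) (n + 1) hbsum
  have hhead : ∑ k ∈ range (n + 1), b k ≤ 3 := by
    have heq : ∀ k ∈ range (n + 1), b k = 1 / (((n - k : ℕ) : ℝ) + 1) ^ 2 := by
      intro k hk
      have hk' : k ≤ n := Nat.lt_succ_iff.mp (mem_range.mp hk)
      have : |(n : ℝ) - (k : ℝ)| = ((n - k : ℕ) : ℝ) := by
        rw [Nat.cast_sub hk', abs_of_nonneg (by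
          have : (k : ℝ) ≤ (n : ℝ) := Nat.cast_le.mpr hk'
          linarith)]
      simp [hbdef, this]
    rw [Finset.sum_congr rfl heq]
    have hreflect : ∑ k ∈ range (n + 1), 1 / (((n - k : ℕ) : ℝ) + 1) ^ 2
        = ∑ j ∈ range (n + 1), 1 / ((j : ℝ) + 1) ^ 2 := by
      rw [← Finset.sum_range_reflect (fun j => 1 / ((j : ℝ) + 1) ^ 2) (n + 1)]
      exact Finset.sum_congr rfl (fun k hk => by simp)
    rw [hreflect]
    exact (Summable.sum_le_tsum _ (fun j _ => by positivity) hb).trans hbs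
  have htail_le : (∑' k : ℕ, b (k + (n + 1))) ≤ 3 := by
    have : (∑' k : ℕ, b (k + (n + 1))) ≤ ∑' j : ℕ, 1 / ((j : ℝ) + 1) ^ 2 := by
      refine Summable.tsum_le_tsum (fun k => ?_) htail_sum hb
      rw [htail]
      exact one_div_le_one_div_of_le (by positivity) (by nlinarith [Nat.cast_nonneg (α := ℝ) k])
    linarith
  linarith [hsplit]

/-- If `(ξₖ)` is nonnegative with `Σ (k·ξₖ)² < ∞`, then `Σ ξₖ < ∞` and there is an
absolute constant `C` such that for every `n ≥ 1`,
`Σₖ k·ξₖ/(n(|n-k|+1)) ≤ (C/n)·(Σₖ (k·ξₖ)²)^{1/2}`. -/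
theorem weighted_cauchy_schwarz_bound
    (ξ : ℕ → ℝ) (hξ : ∀ k, 0 ≤ ξ k)
    (hsum : Summable fun k : ℕ => ((k : ℝ) * ξ k)^2) :
    Summable ξ ∧
    ∃ C : ℝ, 0 < C ∧ ∀ n : ℕ, 1 ≤ n →
      Summable (fun k : ℕ => (k : ℝ) * ξ k / ((n : ℝ) * (|(n : ℝ) - (k : ℝ)| + 1))) ∧
      (∑' k : ℕ, (k : ℝ) * ξ k / ((n : ℝ) * (|(n : ℝ) - (k : ℝ)| + 1))) ≤
        (C / (n : ℝ)) * Real.sqrt (∑' k : ℕ, ((k : ℝ) * ξ k)^2) := by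
  set f : ℕ → ℝ := fun k => (k : ℝ) * ξ k with hfdef
  have hf0 : ∀ k, 0 ≤ f k := fun k => mul_nonneg (Nat.cast_nonneg k) (hξ k)
  constructor
  · -- Summability of ξ via Cauchy–Schwarz with g k = 1/k
    have hg2 : Summable (fun k : ℕ => (1 / (k : ℝ)) ^ 2) := by
      have := (summable_one_div_nat_pow (p := 2)).mpr one_lt_two
      exact this.congr fun k => by rw [div_pow, one_pow]
    obtain ⟨hs, _⟩ := tsum_cs f (fun k => 1 / (k : ℝ)) hf0 (fun k => by positivity) hsum hg2
    have h1 : Summable (fun k : ℕ => f (k + 1) * (1 / ((k + 1 : ℕ) : ℝ))) :=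
      (summable_nat_add_iff 1).mpr hs
    have h2 : Summable (fun k : ℕ => ξ (k + 1)) := by
      refine h1.congr fun k => ?_
      have hk : ((k + 1 : ℕ) : ℝ) ≠ 0 := by positivity
      simp only [hfdef]
      field_simp
    exact (summable_nat_add_iff 1).mp h2
  · refine ⟨3, by norm_num, fun n hn => ?_⟩
    have hnpos : (0 : ℝ) < n := by exact_mod_cast hn
    obtain ⟨hbsum, hbs⟩ := weight_bound n
    set b : ℕ → ℝ := fun k => 1 / (|(n : ℝ) - (k : ℝ)| + 1) with hbdef
    have hb0 : ∀ k, 0 ≤ b k := fun k => by positivity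
    obtain ⟨hfb, hfbs⟩ := tsum_cs f b hf0 hb0 hsum hbsum
    have habs : ∀ k : ℕ, 0 < |(n : ℝ) - (k : ℝ)| + 1 := fun k => by positivity
    have hterm : ∀ k : ℕ, (k : ℝ) * ξ k / ((n : ℝ) * (|(n : ℝ) - (k : ℝ)| + 1))
        = (1 / (n : ℝ)) * (f k * b k) := by
      intro k
      have := (habs k).ne'
      simp only [hfdef, hbdef]
      field_simp [hfdef, hbdef]
    have hS : Summable (fun k : ℕ => (k : ℝ) * ξ k / ((n : ℝ) * (|(n : ℝ) - (k : ℝ)| + 1))) := by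
      exact (hfb.mul_left (1 / (n : ℝ))).congr fun k => (hterm k).symm
    refine ⟨hS, ?_⟩
    calc (∑' k : ℕ, (k : ℝ) * ξ k / ((n : ℝ) * (|(n : ℝ) - (k : ℝ)| + 1)))
        = (1 / (n : ℝ)) * ∑' k, f k * b k := by
          rw [← tsum_mul_left]; exact tsum_congr hterm
      _ ≤ (1 / (n : ℝ)) * (Real.sqrt (∑' k, f k ^ 2) * Real.sqrt (∑' k, b k ^ 2)) := by
          apply mul_le_mul_of_nonneg_left hfbs (by positivity)
      _ ≤ (3 / (n : ℝ)) * Real.sqrt (∑' k : ℕ, ((k : ℝ) * ξ k)^2) := by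
          have h6 : Real.sqrt (∑' k, b k ^ 2) ≤ 3 := by
            refine (Real.sqrt_le_sqrt hbs).trans ?_
            rw [show (6 : ℝ) = 6 from rfl]
            nlinarith [Real.sq_sqrt (by norm_num : (6:ℝ) ≥ 0), Real.sqrt_nonneg (6:ℝ)]
          have hΛ : 0 ≤ Real.sqrt (∑' k, f k ^ 2) := Real.sqrt_nonneg _
          calc (1 / (n : ℝ)) * (Real.sqrt (∑' k, f k ^ 2) * Real.sqrt (∑' k, b k ^ 2))
              ≤ (1 / (n : ℝ)) * (Real.sqrt (∑' k, f k ^ 2) * 3) := by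
                apply mul_le_mul_of_nonneg_left _ (by positivity)
                exact mul_le_mul_of_nonneg_left h6 hΛ
            _ = (3 / (n : ℝ)) * Real.sqrt (∑' k, f k ^ 2) := by ring
end
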